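/- arXiv:2207.08535 — 2 statements merged into one kernel-verified Lean document; each statement's English description precedes it below -/
import Mathlib

section
/- For binary missingness indicators R = (R_1, ..., R_p) and variables (X, Y) on a finite probability space with p(r | x, y) > 0 for all patterns, the missingness mechanism admits the sequential odds ratio factorization: p(r | x, y) = [∏_{i=1}^p p(r_i | x, y, R_{-i} = 1) · ∏_{i=2}^p η_i(r_i, r_{<i}, x, y)] / Z(x, y), where η_i(r_i, r_{<i}, x, y) = [p(r_i | x, y, r_{<i}, R_{>i} = 1) p(R_i = 1 | x, y, R_{-i} = 1)] / [p(R_i = 1 | x, y, r_{<i}, R_{>i} = 1) p(r_i | x, y, R_{-i} = 1)] and Z(x, y) is the sum of the numerator over all patterns r' ∈ {0,1}^p. -/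
open Finset
open scoped Classical

noncomputable def pr {Ω : Type*} [Fintype Ω] (μ : Ω → ℝ) (A : Ω → Prop) : ℝ :=
  ∑ ω, if A ω then μ ω else 0

noncomputable def cpr {Ω : Type*} [Fintype Ω] (μ : Ω → ℝ) (A B : Ω → Prop) : ℝ :=
  pr μ (fun ω => A ω ∧ B ω) / pr μ B

private lemma pr_congr {Ω : Type*} [Fintype Ω] (μ : Ω → ℝ) {A B : Ω → Prop}
    (h : ∀ ω, A ω ↔ B ω) : pr μ A = pr μ B :=
  Finset.sum_congr rfl fun ω _ => if_congr (h ω) rfl rfl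

private lemma pr_or {Ω : Type*} [Fintype Ω] (μ : Ω → ℝ) {A B : Ω → Prop}
    (h : ∀ ω, ¬(A ω ∧ B ω)) :
    pr μ (fun ω => A ω ∨ B ω) = pr μ A + pr μ B := by
  unfold pr
  rw [← Finset.sum_add_distrib]
  refine Finset.sum_congr rfl fun ω _ => ?_
  by_cases hA : A ω
  · have hB : ¬ B ω := fun hB => h ω ⟨hA, hB⟩
    simp [hA, hB]
  · by_cases hB : B ω <;> simp [hA, hB]

private lemma tele (f : ℕ → ℝ) (hf : ∀ n, f n ≠ 0) (n : ℕ) :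
    ∏ i ∈ Finset.range n, (f (i + 1) / f i) = f n / f 0 := by
  induction n with
  | zero => simp [div_self (hf 0)]
  | succ n ih =>
      rw [Finset.prod_range_succ, ih, div_mul_div_comm,
        mul_comm (f 0) (f n), mul_div_mul_left _ _ (hf n)]

section pats
variable {p : ℕ}

private def pat1 : Fin p → Bool := fun _ => true

private def patu (i : Fin p) (b : Bool) : Fin p → Bool := fun j => if j = i then b else true

private def patv (s : Fin p → Bool) (i : Fin p) (b : Bool) : Fin p → Bool :=
  fun j => if j < i then s j else if j = i then b else true

private def patw (s : Fin p → Bool) (n : ℕ) : Fin p → Bool :=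
  fun j => if (j : ℕ) < n then s j else true

private lemma patu_true (i : Fin p) : patu i true = (pat1 : Fin p → Bool) := by
  funext j; by_cases hj : j = i <;> simp [patu, pat1, hj]

private lemma patv_true (s : Fin p → Bool) (i : Fin p) : patv s i true = patw s (i : ℕ) := by
  funext j
  simp only [patv, patw, Fin.lt_def]
  split_ifs <;> rfl

private lemma patv_self (s : Fin p → Bool) (i : Fin p) :
    patv s i (s i) = patw s ((i : ℕ) + 1) := by
  funext j
  rcases lt_trichotomy (j : ℕ) (i : ℕ) with h | h | h
  · simp [patv, patw, Fin.lt_def, h, Nat.lt_succ_of_lt h]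
  · have hj : j = i := Fin.ext h
    subst hj
    simp [patv, patw, Nat.lt_succ_self]
  · have h1 : ¬ (j : ℕ) < (i : ℕ) := not_lt.mpr h.le
    have h2 : j ≠ i := fun e => absurd (congrArg Fin.val e) (by omega)
    have h3 : ¬ (j : ℕ) < (i : ℕ) + 1 := by omega
    simp [patv, patw, Fin.lt_def, h1, h2, h3]

private lemma patw_zero (s : Fin p → Bool) : patw s 0 = (pat1 : Fin p → Bool) := by
  funext j; simp [patw, pat1]

private lemma patw_last (s : Fin p → Bool) : patw s p = s := by
  funext j; simp [patw, j.isLt]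

private lemma patu_zero (s : Fin p → Bool) (i : Fin p) (h : (i : ℕ) = 0) :
    patu i (s i) = patw s 1 := by
  funext j
  by_cases hj : j = i
  · subst hj; simp [patu, patw, h]
  · have h0 : ¬ (j : ℕ) < 1 := by
      intro h1
      exact hj (Fin.ext (by omega))
    simp [patu, patw, hj, h0]

end pats

section

variable {Ω 𝒳 𝒴 : Type*} [Fintype Ω] {p : ℕ}

/-- The itemwise propensity `p(R_i = b | X = x, Y = y, R_{-i} = 1)`. -/
noncomputable def itemProp (μ : Ω → ℝ) (X : Ω → 𝒳) (Y : Ω → Fin p → 𝒴)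
    (R : Ω → Fin p → Bool) (i : Fin p) (b : Bool) (x : 𝒳) (y : Fin p → 𝒴) : ℝ :=
  cpr μ (fun ω => R ω i = b)
    (fun ω => X ω = x ∧ (∀ j, Y ω j = y j) ∧ ∀ j, j ≠ i → R ω j = true)

/-- `p(R_i = b | X = x, Y = y, R_{<i} = r_{<i}, R_{>i} = 1)`. -/
noncomputable def seqProp (μ : Ω → ℝ) (X : Ω → 𝒳) (Y : Ω → Fin p → 𝒴)
    (R : Ω → Fin p → Bool) (i : Fin p) (b : Bool) (r : Fin p → Bool)
    (x : 𝒳) (y : Fin p → 𝒴) : ℝ :=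
  cpr μ (fun ω => R ω i = b)
    (fun ω => X ω = x ∧ (∀ j, Y ω j = y j) ∧ (∀ j, j < i → R ω j = r j) ∧
      ∀ j, i < j → R ω j = true)

/-- The sequential odds ratio `η_i(r_i, r_{<i}, x, y)`. -/
noncomputable def eta (μ : Ω → ℝ) (X : Ω → 𝒳) (Y : Ω → Fin p → 𝒴)
    (R : Ω → Fin p → Bool) (i : Fin p) (r : Fin p → Bool)
    (x : 𝒳) (y : Fin p → 𝒴) : ℝ :=
  (seqProp μ X Y R i (r i) r x y * itemProp μ X Y R i true x y) /
    (seqProp μ X Y R i true r x y * itemProp μ X Y R i (r i) x y)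

/-- Numerator of the sequential odds ratio factorization for pattern `r`. -/
noncomputable def seqNum (μ : Ω → ℝ) (X : Ω → 𝒳) (Y : Ω → Fin p → 𝒴)
    (R : Ω → Fin p → Bool) (r : Fin p → Bool) (x : 𝒳) (y : Fin p → 𝒴) : ℝ :=
  (∏ i : Fin p, itemProp μ X Y R i (r i) x y) *
    ∏ i ∈ Finset.univ.filter (fun i : Fin p => 0 < (i : ℕ)), eta μ X Y R i r x y

section helpers2
variable (μ : Ω → ℝ) (X : Ω → 𝒳) (Y : Ω → Fin p → 𝒴) (R : Ω → Fin p → Bool)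
  (x : 𝒳) (y : Fin p → 𝒴)

private noncomputable def Qpat (s : Fin p → Bool) : ℝ :=
  pr μ (fun ω => (X ω = x ∧ ∀ j, Y ω j = y j) ∧ ∀ j, R ω j = s j)

private lemma itemProp_eq (i : Fin p) (b : Bool) :
    itemProp μ X Y R i b x y =
      Qpat μ X Y R x y (patu i b) /
        (Qpat μ X Y R x y pat1 + Qpat μ X Y R x y (patu i false)) := by
  unfold itemProp cpr Qpat
  congr 1
  · apply pr_congr
    intro ω
    constructor
    · rintro ⟨hb, hx, hy, hR⟩
      refine ⟨⟨hx, hy⟩, fun j => ?_⟩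
      by_cases hj : j = i
      · subst hj; simpa [patu] using hb
      · simpa [patu, hj] using hR j hj
    · rintro ⟨⟨hx, hy⟩, hR⟩
      exact ⟨by simpa [patu] using hR i, hx, hy,
        fun j hj => by simpa [patu, hj] using hR j⟩
  · rw [← pr_or μ (fun ω h => by
        have := (h.1.2 i).symm.trans (h.2.2 i); simp [pat1, patu] at this)]
    apply pr_congr
    intro ω
    constructor
    · rintro ⟨hx, hy, hR⟩
      cases hri : R ω i with
      | true =>
          left
          refine ⟨⟨hx, hy⟩, fun j => ?_⟩
          by_cases hj : j = i
          · subst hj; simpa [pat1] using hri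
          · simpa [pat1] using hR j hj
      | false =>
          right
          refine ⟨⟨hx, hy⟩, fun j => ?_⟩
          by_cases hj : j = i
          · subst hj; simpa [patu] using hri
          · simpa [patu, hj] using hR j hj
    · rintro (⟨⟨hx, hy⟩, hR⟩ | ⟨⟨hx, hy⟩, hR⟩)
      · exact ⟨hx, hy, fun j hj => by simpa [pat1] using hR j⟩
      · exact ⟨hx, hy, fun j hj => by simpa [patu, hj] using hR j⟩

private lemma seqProp_eq (s : Fin p → Bool) (i : Fin p) (b : Bool) :
    seqProp μ X Y R i b s x y =
      Qpat μ X Y R x y (patv s i b) /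
        (Qpat μ X Y R x y (patv s i true) + Qpat μ X Y R x y (patv s i false)) := by
  unfold seqProp cpr Qpat
  congr 1
  · apply pr_congr
    intro ω
    constructor
    · rintro ⟨hb, hx, hy, hlt, hgt⟩
      refine ⟨⟨hx, hy⟩, fun j => ?_⟩
      rcases lt_trichotomy j i with h | h | h
      · simpa [patv, h] using hlt j h
      · subst h; simpa [patv] using hb
      · have h1 : ¬ j < i := asymm h
        simpa [patv, h1, h.ne'] using hgt j h
    · rintro ⟨⟨hx, hy⟩, hR⟩
      refine ⟨by simpa [patv] using hR i, hx, hy,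
        fun j hj => by simpa [patv, hj] using hR j,
        fun j hj => by simpa [patv, asymm hj, hj.ne'] using hR j⟩
  · rw [← pr_or μ (fun ω h => by
        have := (h.1.2 i).symm.trans (h.2.2 i); simp [patv] at this)]
    apply pr_congr
    intro ω
    constructor
    · rintro ⟨hx, hy, hlt, hgt⟩
      cases hri : R ω i with
      | true =>
          left
          refine ⟨⟨hx, hy⟩, fun j => ?_⟩
          rcases lt_trichotomy j i with h | h | h
          · simpa [patv, h] using hlt j h
          · subst h; simpa [patv] using hri
          · have h1 : ¬ j < i := asymm h
            simpa [patv, h1, h.ne'] using hgt j h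
      | false =>
          right
          refine ⟨⟨hx, hy⟩, fun j => ?_⟩
          rcases lt_trichotomy j i with h | h | h
          · simpa [patv, h] using hlt j h
          · subst h; simpa [patv] using hri
          · have h1 : ¬ j < i := asymm h
            simpa [patv, h1, h.ne'] using hgt j h
    · rintro (⟨⟨hx, hy⟩, hR⟩ | ⟨⟨hx, hy⟩, hR⟩) <;>
        exact ⟨hx, hy,
          fun j hj => by simpa [patv, hj] using hR j,
          fun j hj => by simpa [patv, asymm hj, hj.ne'] using hR j⟩

end helpers2

section helpers3
variable (μ : Ω → ℝ) (X : Ω → 𝒳) (Y : Ω → Fin p → 𝒴) (R : Ω → Fin p → Bool)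
  (x : 𝒳) (y : Fin p → 𝒴)

private lemma eta_eq (hQ : ∀ s, 0 < Qpat μ X Y R x y s) (s : Fin p → Bool) (i : Fin p) :
    eta μ X Y R i s x y =
      (Qpat μ X Y R x y (patw s ((i : ℕ) + 1)) * Qpat μ X Y R x y pat1) /
        (Qpat μ X Y R x y (patw s (i : ℕ)) * Qpat μ X Y R x y (patu i (s i))) := by
  have hS : (0:ℝ) < Qpat μ X Y R x y (patv s i true) + Qpat μ X Y R x y (patv s i false) :=
    add_pos (hQ _) (hQ _)
  have hD : (0:ℝ) < Qpat μ X Y R x y pat1 + Qpat μ X Y R x y (patu i false) :=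
    add_pos (hQ _) (hQ _)
  have h1 := (hQ (patw s (i : ℕ))).ne'
  have h2 := (hQ (patu i (s i))).ne'
  have h3 := hS.ne'
  have h4 := hD.ne'
  unfold eta
  rw [seqProp_eq, seqProp_eq, itemProp_eq, itemProp_eq, patu_true, patv_self, patv_true]
  rw [patv_true] at h3
  field_simp

private lemma seqNum_eq (hQ : ∀ s, 0 < Qpat μ X Y R x y s) (s : Fin p → Bool) :
    seqNum μ X Y R s x y =
      Qpat μ X Y R x y s *
        ((∏ i : Fin p, (Qpat μ X Y R x y pat1 /
            (Qpat μ X Y R x y pat1 + Qpat μ X Y R x y (patu i false)))) /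
          Qpat μ X Y R x y pat1) := by
  unfold seqNum
  have h1 : (∏ i : Fin p, itemProp μ X Y R i (s i) x y)
      = ∏ i : Fin p, Qpat μ X Y R x y (patu i (s i)) /
          (Qpat μ X Y R x y pat1 + Qpat μ X Y R x y (patu i false)) :=
    Finset.prod_congr rfl fun i _ => itemProp_eq μ X Y R x y i (s i)
  have h2 : (∏ i ∈ Finset.univ.filter (fun i : Fin p => 0 < (i : ℕ)), eta μ X Y R i s x y)
      = ∏ i : Fin p, (Qpat μ X Y R x y (patw s ((i : ℕ) + 1)) / Qpat μ X Y R x y (patw s (i : ℕ)))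
          * (Qpat μ X Y R x y pat1 / Qpat μ X Y R x y (patu i (s i))) := by
    rw [Finset.prod_filter]
    refine Finset.prod_congr rfl fun i _ => ?_
    by_cases hi : 0 < (i : ℕ)
    · rw [if_pos hi, eta_eq μ X Y R x y hQ s i, div_mul_div_comm]
    · rw [if_neg hi]
      have hi0 : (i : ℕ) = 0 := Nat.eq_zero_of_not_pos hi
      have e1 : patw s ((i : ℕ) + 1) = patw s 1 := by rw [hi0]
      have e2 : patw s (i : ℕ) = pat1 := by rw [hi0]; exact patw_zero s
      rw [e1, e2, patu_zero s i hi0, div_mul_div_comm,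
        mul_comm (Qpat μ X Y R x y (patw s 1)) (Qpat μ X Y R x y pat1),
        div_self (mul_ne_zero (hQ _).ne' (hQ _).ne')]
  rw [h1, h2, Finset.prod_mul_distrib]
  have h3 : (∏ i : Fin p, Qpat μ X Y R x y (patw s ((i : ℕ) + 1)) / Qpat μ X Y R x y (patw s (i : ℕ)))
      = Qpat μ X Y R x y s / Qpat μ X Y R x y pat1 := by
    have := Fin.prod_univ_eq_prod_range
      (fun n => Qpat μ X Y R x y (patw s (n + 1)) / Qpat μ X Y R x y (patw s n)) p
    rw [this, tele (fun n => Qpat μ X Y R x y (patw s n)) (fun n => (hQ _).ne') p,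
      patw_last, patw_zero]
  rw [h3]
  have h4 : (∏ i : Fin p, Qpat μ X Y R x y (patu i (s i)) /
        (Qpat μ X Y R x y pat1 + Qpat μ X Y R x y (patu i false)))
      * ∏ i : Fin p, Qpat μ X Y R x y pat1 / Qpat μ X Y R x y (patu i (s i))
      = ∏ i : Fin p, Qpat μ X Y R x y pat1 /
          (Qpat μ X Y R x y pat1 + Qpat μ X Y R x y (patu i false)) := by
    rw [← Finset.prod_mul_distrib]
    refine Finset.prod_congr rfl fun i _ => ?_
    rw [div_mul_div_comm,
      mul_comm (Qpat μ X Y R x y pat1 + Qpat μ X Y R x y (patu i false))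
        (Qpat μ X Y R x y (patu i (s i))),
      mul_div_mul_left _ _ (hQ _).ne']
  linear_combination (Qpat μ X Y R x y s / Qpat μ X Y R x y pat1) * h4

end helpers3


/-- with positivity of every pattern propensity, the missingness
mechanism admits the sequential odds ratio factorization
`p(r | x, y) = seqNum r / ∑_{r'} seqNum r'`. -/
theorem stmt2 (μ : Ω → ℝ) (hμ0 : ∀ ω, 0 ≤ μ ω) (hμ1 : ∑ ω, μ ω = 1)
    (X : Ω → 𝒳) (Y : Ω → Fin p → 𝒴) (R : Ω → Fin p → Bool)
    (x : 𝒳) (y : Fin p → 𝒴)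
    (hxy : pr μ (fun ω => X ω = x ∧ ∀ j, Y ω j = y j) > 0)
    (hpos : ∀ r' : Fin p → Bool,
      cpr μ (fun ω => ∀ j, R ω j = r' j) (fun ω => X ω = x ∧ ∀ j, Y ω j = y j) > 0)
    (r : Fin p → Bool) :
    cpr μ (fun ω => ∀ j, R ω j = r j) (fun ω => X ω = x ∧ ∀ j, Y ω j = y j)
      = seqNum μ X Y R r x y / ∑ r' : Fin p → Bool, seqNum μ X Y R r' x y := by
  classical
  have hQ : ∀ s, 0 < Qpat μ X Y R x y s := by
    intro s
    have h1 := hpos s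
    rw [cpr] at h1
    have h2 : pr μ (fun ω => (∀ j, R ω j = s j) ∧ (X ω = x ∧ ∀ j, Y ω j = y j))
        = Qpat μ X Y R x y s := pr_congr μ fun ω => and_comm
    rw [h2] at h1
    rcases div_pos_iff.mp h1 with ⟨h, _⟩ | ⟨_, h⟩
    · exact h
    · exact absurd hxy (not_lt.mpr h.le)
  have hsum : ∑ s : Fin p → Bool, Qpat μ X Y R x y s
      = pr μ (fun ω => X ω = x ∧ ∀ j, Y ω j = y j) := by
    unfold Qpat pr
    rw [Finset.sum_comm]
    refine Finset.sum_congr rfl fun ω _ => ?_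
    by_cases hω : X ω = x ∧ ∀ j, Y ω j = y j
    · simp only [hω, true_and, if_true]
      simp only [show ∀ s : Fin p → Bool, (∀ j, R ω j = s j) = (R ω = s) from
        fun s => propext funext_iff.symm]
      simp
    · simp [hω]
  have hC : 0 < (∏ i : Fin p, Qpat μ X Y R x y pat1 /
        (Qpat μ X Y R x y pat1 + Qpat μ X Y R x y (patu i false))) / Qpat μ X Y R x y pat1 :=
    div_pos (Finset.prod_pos fun i _ => div_pos (hQ _) (add_pos (hQ _) (hQ _))) (hQ _)
  rw [cpr]
  have hnum : pr μ (fun ω => (∀ j, R ω j = r j) ∧ (X ω = x ∧ ∀ j, Y ω j = y j))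
      = Qpat μ X Y R x y r := pr_congr μ fun ω => and_comm
  rw [hnum]
  simp only [seqNum_eq μ X Y R x y hQ]
  rw [← Finset.sum_mul, hsum, mul_div_mul_right _ _ hC.ne']

end
end

section
/- The augmented (doubly robust) identity holds: for discrete (X, Y, R) with positivity and any function m(x, y), E[ 1(R=1) m(X,Y)/Π_1(X,Y) + Σ_{r≠1} 1(R=r) E{m(X,Y) | X, Y_{(r)}, R=r} − 1(R=1)/Π_1(X,Y) · Σ_{r≠1} Π_r(X,Y) E{m(X,Y) | X, Y_{(r)}, R=r} ] = E{m(X, Y)}, where Π_r(x, y) = p(R = r | x, y). -/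
/-!
The tower property gives `E[1(R = r) f(X, Y)] = E[Π_r(X, Y) f(X, Y)]` for every pattern `r` and
every `f`. With `f = m / Π_1`, positivity of `Π_1` on the support makes the inverse-probability
term have mean `E m`; with `f = c_r` and with `f = Σ_{r ≠ 1} Π_r c_r / Π_1` the two augmentation
terms both have mean `E[Σ_{r ≠ 1} Π_r c_r]` and cancel, whatever the functions `c_r` are.
-/

open Finset
open scoped Classical

/-- Conditional expectation `E{h | B}` in a finite probability space. -/
noncomputable def cexp {Ω : Type*} [Fintype Ω] (μ : Ω → ℝ) (h : Ω → ℝ) (B : Ω → Prop) : ℝ :=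
  (∑ ω, if B ω then μ ω * h ω else 0) / pr μ B

section

variable {Ω 𝒳 𝒴 : Type*} [Fintype Ω] {p : ℕ}

/-- The propensity `Π_r(x, y) = p(R = r | X = x, Y = y)`. -/
noncomputable def patProp (μ : Ω → ℝ) (X : Ω → 𝒳) (Y : Ω → Fin p → 𝒴)
    (R : Ω → Fin p → Bool) (r : Fin p → Bool) (x : 𝒳) (y : Fin p → 𝒴) : ℝ :=
  cpr μ (fun ω => ∀ j, R ω j = r j) (fun ω => X ω = x ∧ ∀ j, Y ω j = y j)

/-- `E{m(X,Y) | X = x, Y_{(r)} = y_{(r)}, R = r}`: conditional expectation of `m`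
given the covariates, the coordinates of `Y` observed under pattern `r`, and `R = r`. -/
noncomputable def patCexp (μ : Ω → ℝ) (X : Ω → 𝒳) (Y : Ω → Fin p → 𝒴)
    (R : Ω → Fin p → Bool) (m : 𝒳 → (Fin p → 𝒴) → ℝ) (r : Fin p → Bool)
    (x : 𝒳) (y : Fin p → 𝒴) : ℝ :=
  cexp μ (fun ω => m (X ω) (Y ω))
    (fun ω => X ω = x ∧ (∀ j, r j = true → Y ω j = y j) ∧ ∀ j, R ω j = r j)

lemma le_pr {μ : Ω → ℝ} (hμ : ∀ ω, 0 ≤ μ ω) {A : Ω → Prop} {ω : Ω} (hA : A ω) :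
    μ ω ≤ pr μ A := by
  have := Finset.single_le_sum (f := fun ω' => if A ω' then μ ω' else 0)
    (fun ω' _ => by split <;> simp [hμ ω']) (mem_univ ω)
  simpa [pr, hA] using this

lemma sum_mul_pr_and_fiber {β : Type*} (μ : Ω → ℝ) (A : Ω → Prop) (V : Ω → β) (g : β → ℝ) :
    ∑ ω, μ ω * (pr μ (fun ω' => A ω' ∧ V ω' = V ω) * g (V ω))
      = ∑ ω, (if A ω then μ ω else 0) * (pr μ (fun ω' => V ω' = V ω) * g (V ω)) := by
  simp only [pr, Finset.sum_mul, Finset.mul_sum]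
  rw [Finset.sum_comm]
  refine Finset.sum_congr rfl fun ω _ => Finset.sum_congr rfl fun ω' _ => ?_
  by_cases hV : V ω' = V ω
  · by_cases hA : A ω <;> simp [hA, hV]; ring
  · simp [hV, Ne.symm hV]

lemma sum_mul_ite_eq_sum_mul_cpr {β : Type*} {μ : Ω → ℝ} (hμ : ∀ ω, 0 ≤ μ ω)
    (A : Ω → Prop) [DecidablePred A] (V : Ω → β) (f : β → ℝ) :
    ∑ ω, μ ω * (if A ω then f (V ω) else 0)
      = ∑ ω, μ ω * (cpr μ A (fun ω' => V ω' = V ω) * f (V ω)) := by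
  have hswap := sum_mul_pr_and_fiber μ A V (fun v => f v / pr μ (fun ω' => V ω' = v))
  simp only [cpr, div_mul_eq_mul_div, mul_div_assoc] at hswap ⊢
  rw [hswap]
  refine Finset.sum_congr rfl fun ω _ => ?_
  by_cases hA : A ω
  · rcases (hμ ω).eq_or_lt with hμω | hμω
    · simp [← hμω]
    · have hfiber : pr μ (fun ω' => V ω' = V ω) ≠ 0 :=
        (hμω.trans_le (le_pr hμ (A := fun ω' => V ω' = V ω) rfl)).ne'
      simp [hA, mul_div_cancel₀ _ hfiber]
  · simp [hA]

lemma patProp_eq_cpr (μ : Ω → ℝ) (X : Ω → 𝒳) (Y : Ω → Fin p → 𝒴) (R : Ω → Fin p → Bool)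
    (r : Fin p → Bool) (x : 𝒳) (y : Fin p → 𝒴) :
    patProp μ X Y R r x y
      = cpr μ (fun ω => ∀ j, R ω j = r j) (fun ω => (X ω, Y ω) = (x, y)) := by
  simp only [patProp, Prod.mk.injEq, funext_iff]

lemma sum_mul_ite_pattern_eq {μ : Ω → ℝ} (hμ : ∀ ω, 0 ≤ μ ω)
    (X : Ω → 𝒳) (Y : Ω → Fin p → 𝒴) (R : Ω → Fin p → Bool) (r : Fin p → Bool)
    (f : 𝒳 → (Fin p → 𝒴) → ℝ) :
    ∑ ω, μ ω * (if ∀ j, R ω j = r j then f (X ω) (Y ω) else 0)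
      = ∑ ω, μ ω * (patProp μ X Y R r (X ω) (Y ω) * f (X ω) (Y ω)) := by
  simpa only [patProp_eq_cpr] using
    sum_mul_ite_eq_sum_mul_cpr hμ _ (fun ω => (X ω, Y ω)) (fun v => f v.1 v.2)

lemma sum_mul_ite_div_patProp {μ : Ω → ℝ} (hμ : ∀ ω, 0 ≤ μ ω)
    (X : Ω → 𝒳) (Y : Ω → Fin p → 𝒴) (R : Ω → Fin p → Bool) (r : Fin p → Bool)
    (hpos : ∀ ω, μ ω ≠ 0 → patProp μ X Y R r (X ω) (Y ω) ≠ 0)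
    (f : 𝒳 → (Fin p → 𝒴) → ℝ) :
    ∑ ω, μ ω * (if ∀ j, R ω j = r j then
        f (X ω) (Y ω) / patProp μ X Y R r (X ω) (Y ω) else 0)
      = ∑ ω, μ ω * f (X ω) (Y ω) := by
  rw [sum_mul_ite_pattern_eq hμ X Y R r (fun x y => f x y / patProp μ X Y R r x y)]
  refine Finset.sum_congr rfl fun ω _ => ?_
  by_cases hω : μ ω = 0
  · simp [hω]
  · rw [mul_div_cancel₀ _ (hpos ω hω)]

theorem stmt15_general (μ : Ω → ℝ) (hμ0 : ∀ ω, 0 ≤ μ ω)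
    (X : Ω → 𝒳) (Y : Ω → Fin p → 𝒴) (R : Ω → Fin p → Bool)
    (hpos : ∀ (r' : Fin p → Bool) (x : 𝒳) (y : Fin p → 𝒴),
      pr μ (fun ω => X ω = x ∧ ∀ j, Y ω j = y j) > 0 → patProp μ X Y R r' x y > 0)
    (m : 𝒳 → (Fin p → 𝒴) → ℝ) :
    ∑ ω, μ ω *
      ((if ∀ j, R ω j = true then
          m (X ω) (Y ω) / patProp μ X Y R (fun _ => true) (X ω) (Y ω) else 0)
        + (∑ r ∈ Finset.univ.filter (fun r : Fin p → Bool => r ≠ fun _ => true),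
            if ∀ j, R ω j = r j then patCexp μ X Y R m r (X ω) (Y ω) else 0)
        - (if ∀ j, R ω j = true then
            (∑ r ∈ Finset.univ.filter (fun r : Fin p → Bool => r ≠ fun _ => true),
              patProp μ X Y R r (X ω) (Y ω) * patCexp μ X Y R m r (X ω) (Y ω)) /
              patProp μ X Y R (fun _ => true) (X ω) (Y ω)
          else 0))
      = ∑ ω, μ ω * m (X ω) (Y ω) := by
  set S := Finset.univ.filter (fun r : Fin p → Bool => r ≠ fun _ => true)
  have hcomplete : ∀ ω, μ ω ≠ 0 → patProp μ X Y R (fun _ => true) (X ω) (Y ω) ≠ 0 :=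
    fun ω hω => (hpos _ _ _ (((hμ0 ω).lt_of_ne' hω).trans_le
      (le_pr hμ0 (A := fun ω' => X ω' = X ω ∧ ∀ j, Y ω' j = Y ω j) ⟨rfl, fun _ => rfl⟩))).ne'
  have hincomplete : ∑ ω, μ ω * ∑ r ∈ S,
        (if ∀ j, R ω j = r j then patCexp μ X Y R m r (X ω) (Y ω) else 0)
      = ∑ ω, μ ω * ∑ r ∈ S, patProp μ X Y R r (X ω) (Y ω) * patCexp μ X Y R m r (X ω) (Y ω) := by
    simp only [Finset.mul_sum]
    rw [Finset.sum_comm, Finset.sum_comm (s := Finset.univ)]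
    exact Finset.sum_congr rfl fun r _ => sum_mul_ite_pattern_eq hμ0 X Y R r _
  simp only [mul_sub, mul_add, Finset.sum_add_distrib, Finset.sum_sub_distrib]
  rw [sum_mul_ite_div_patProp hμ0 X Y R _ hcomplete m, hincomplete,
    sum_mul_ite_div_patProp hμ0 X Y R _ hcomplete
      (fun x y => ∑ r ∈ S, patProp μ X Y R r x y * patCexp μ X Y R m r x y)]
  ring

/-- the augmented (doubly robust) identity: the AIPW transformation of
`m` has the same mean as `m(X, Y)` itself. -/
theorem stmt15 (μ : Ω → ℝ) (hμ0 : ∀ ω, 0 ≤ μ ω) (hμ1 : ∑ ω, μ ω = 1)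
    (X : Ω → 𝒳) (Y : Ω → Fin p → 𝒴) (R : Ω → Fin p → Bool)
    (hpos : ∀ (r' : Fin p → Bool) (x : 𝒳) (y : Fin p → 𝒴),
      pr μ (fun ω => X ω = x ∧ ∀ j, Y ω j = y j) > 0 → patProp μ X Y R r' x y > 0)
    (m : 𝒳 → (Fin p → 𝒴) → ℝ) :
    ∑ ω, μ ω *
      ((if ∀ j, R ω j = true then
          m (X ω) (Y ω) / patProp μ X Y R (fun _ => true) (X ω) (Y ω) else 0)
        + (∑ r ∈ Finset.univ.filter (fun r : Fin p → Bool => r ≠ fun _ => true),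
            if ∀ j, R ω j = r j then patCexp μ X Y R m r (X ω) (Y ω) else 0)
        - (if ∀ j, R ω j = true then
            (∑ r ∈ Finset.univ.filter (fun r : Fin p → Bool => r ≠ fun _ => true),
              patProp μ X Y R r (X ω) (Y ω) * patCexp μ X Y R m r (X ω) (Y ω)) /
              patProp μ X Y R (fun _ => true) (X ω) (Y ω)
          else 0))
      = ∑ ω, μ ω * m (X ω) (Y ω) :=
  stmt15_general μ hμ0 X Y R hpos m

end
end
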